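/- Let S be a Γ-hemiring with left and right unities. The map σ ↦ σ⁺′ is a lattice isomorphism from the lattice of fuzzy h-ideals of S (with σ(0)=1) onto the lattice of fuzzy h-ideals of the left operator hemiring L (with μ(0_L)=1); in particular it is an inclusion-preserving bijection satisfying (σ₁ ⊕ σ₂)⁺′ = σ₁⁺′ ⊕ σ₂⁺′ and (σ₁ ∩ σ₂)⁺′ = σ₁⁺′ ∩ σ₂⁺′. -/

import Mathlib

open scoped Classical

/-- A `Γ`-hemiring structure on additive commutative monoids `S` and `Γ`. -/
structure GammaHemiring (S : Type) (Γ : Type) [AddCommMonoid S] [AddCommMonoid Γ] : Type where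
  tri : S → Γ → S → S
  add_left : ∀ a b α c, tri (a + b) α c = tri a α c + tri b α c
  add_mid : ∀ a α β b, tri a (α + β) b = tri a α b + tri a β b
  add_right : ∀ a α b c, tri a α (b + c) = tri a α b + tri a α c
  tri_assoc : ∀ a α b β c, tri a α (tri b β c) = tri (tri a α b) β c
  zero_left : ∀ α a, tri 0 α a = 0
  zero_right : ∀ a α, tri a α 0 = 0
  zero_mid : ∀ a b, tri a 0 b = 0

namespace GammaHemiring

variable {S Γ : Type} [AddCommMonoid S] [AddCommMonoid Γ] (H : GammaHemiring S Γ)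

/-- Action of a formal sum `Σ (xᵢ, αᵢ)` on an element of `S`. -/
def lAct (u : Multiset (S × Γ)) (a : S) : S := (u.map fun p => H.tri p.1 p.2 a).sum

/-- The congruence `ρ` on the free additive commutative semigroup on `S × Γ`. -/
def lSetoid : Setoid (Multiset (S × Γ)) where
  r u v := ∀ a, H.lAct u a = H.lAct v a
  iseqv := ⟨fun _ _ => rfl, fun h a => (h a).symm, fun h1 h2 a => (h1 a).trans (h2 a)⟩

/-- The left operator hemiring `L` of a `Γ`-hemiring `S`. -/
def LOp := Quotient H.lSetoid

/-- Multiplication of formal sums: `(Σ[xᵢ,αᵢ])(Σ[yⱼ,βⱼ]) = Σ[xᵢαᵢyⱼ, βⱼ]`. -/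
def lMul (u v : Multiset (S × Γ)) : Multiset (S × Γ) :=
  u.bind fun p => v.map fun q => (H.tri p.1 p.2 q.1, q.2)

lemma lAct_add (u v : Multiset (S × Γ)) (a : S) :
    H.lAct (u + v) a = H.lAct u a + H.lAct v a := by
  simp [lAct]

lemma tri_sum (x : S) (α : Γ) (m : Multiset S) :
    H.tri x α m.sum = (m.map (H.tri x α)).sum := by
  induction m using Multiset.induction_on with
  | empty => simp [H.zero_right]
  | cons b m ih => simp [H.add_right, ih]

lemma lAct_arg_add (u : Multiset (S × Γ)) (b c : S) :
    H.lAct u (b + c) = H.lAct u b + H.lAct u c := by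
  simp only [lAct, H.add_right]
  rw [← Multiset.sum_map_add]

lemma lAct_arg_zero (u : Multiset (S × Γ)) : H.lAct u 0 = 0 := by
  simp [lAct, H.zero_right]

lemma lAct_zero (a : S) : H.lAct 0 a = 0 := by simp [lAct]

lemma lAct_mul (u v : Multiset (S × Γ)) (a : S) :
    H.lAct (H.lMul u v) a = H.lAct u (H.lAct v a) := by
  unfold lAct lMul
  rw [Multiset.map_bind, Multiset.sum_bind]
  congr 1
  refine Multiset.map_congr rfl ?_
  intro p _
  rw [tri_sum, Multiset.map_map, Multiset.map_map]
  congr 1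
  refine Multiset.map_congr rfl ?_
  intro q _
  simp [Function.comp, H.tri_assoc]

noncomputable instance : Add H.LOp :=
  ⟨Quotient.map₂ (· + ·) (fun {u u'} hu {v v'} hv a => by
    rw [lAct_add, lAct_add, hu a, hv a])⟩

noncomputable instance : Zero H.LOp := ⟨Quotient.mk H.lSetoid 0⟩

noncomputable instance : Mul H.LOp :=
  ⟨Quotient.map₂ H.lMul (fun {u u'} hu {v v'} hv a => by
    rw [lAct_mul, lAct_mul, hv a, hu (H.lAct v' a)])⟩

/-- The left operator hemiring structure. -/
noncomputable instance : NonUnitalSemiring H.LOp where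
  add := (· + ·)
  zero := 0
  mul := (· * ·)
  nsmul := nsmulRec
  nsmul_zero := fun _ => rfl
  nsmul_succ := fun _ _ => rfl
  add_assoc a b c := Quotient.inductionOn₃ a b c fun u v w =>
    congrArg (Quotient.mk _) (add_assoc u v w)
  zero_add a := Quotient.inductionOn a fun u => congrArg (Quotient.mk _) (zero_add u)
  add_zero a := Quotient.inductionOn a fun u => congrArg (Quotient.mk _) (add_zero u)
  add_comm a b := Quotient.inductionOn₂ a b fun u v => congrArg (Quotient.mk _) (add_comm u v)
  left_distrib a b c := Quotient.inductionOn₃ a b c fun u v w => Quotient.sound fun s => by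
    simp [lAct_mul, lAct_add, lAct_arg_add]
  right_distrib a b c := Quotient.inductionOn₃ a b c fun u v w => Quotient.sound fun s => by
    simp [lAct_mul, lAct_add]
  zero_mul a := Quotient.inductionOn a fun u => Quotient.sound fun s => by
    simp [lAct_mul, lAct_zero]
  mul_zero a := Quotient.inductionOn a fun u => Quotient.sound fun s => by
    simp [lAct_mul, lAct_zero, lAct_arg_zero]
  mul_assoc a b c := Quotient.inductionOn₃ a b c fun u v w => Quotient.sound fun s => by
    simp [lAct_mul]

/-- The class of a formal sum in `L`. -/
def lMk (u : Multiset (S × Γ)) : H.LOp := Quotient.mk H.lSetoid u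

lemma mk_add (u v : Multiset (S × Γ)) : H.lMk u + H.lMk v = H.lMk (u + v) := rfl

lemma mk_mul (u v : Multiset (S × Γ)) : H.lMk u * H.lMk v = H.lMk (H.lMul u v) := rfl

/-- Action of an element of `L` on `S`. -/
def lActQ : H.LOp → S → S := Quotient.lift H.lAct (fun _ _ h => funext h)

end GammaHemiring
instance : Fact ((0:ℝ) ≤ 1) := ⟨zero_le_one⟩

/-- Characteristic function of a subset, valued in the unit interval. -/
noncomputable def fuzzyChar {X : Type} (A : Set X) (x : X) : unitInterval :=
  if x ∈ A then 1 else 0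

/-- A fuzzy h-ideal of a hemiring. -/
def IsFuzzyHIdeal {T : Type} [NonUnitalSemiring T] (μ : T → unitInterval) : Prop :=
  (∀ x y, μ x ⊓ μ y ≤ μ (x + y)) ∧
  (∀ x y, μ x ⊔ μ y ≤ μ (x * y)) ∧
  (∀ x a b z, x + a + z = b + z → μ a ⊓ μ b ≤ μ x)

namespace GammaHemiring

variable {S Γ : Type} [AddCommMonoid S] [AddCommMonoid Γ] (H : GammaHemiring S Γ)

/-- A fuzzy h-ideal of a `Γ`-hemiring. -/
def IsGFuzzyHIdeal (μ : S → unitInterval) : Prop :=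
  (∀ x y, μ x ⊓ μ y ≤ μ (x + y)) ∧
  (∀ x γ y, μ x ⊔ μ y ≤ μ (H.tri x γ y)) ∧
  (∀ x a b z, x + a + z = b + z → μ a ⊓ μ b ≤ μ x)

/-- For a fuzzy subset `μ` of `L`, the fuzzy subset `μ⁺` of `S`, `μ⁺(x) = inf_γ μ([x,γ])`. -/
noncomputable def plusMap (μ : H.LOp → unitInterval) (x : S) : unitInterval :=
  ⨅ γ : Γ, μ (H.lMk {(x, γ)})

/-- For a fuzzy subset `σ` of `S`, the fuzzy subset `σ⁺′` of `L`,
`σ⁺′(Σᵢ[xᵢ,αᵢ]) = inf_s σ(Σᵢ xᵢαᵢs)`. -/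
noncomputable def plusPrime (σ : S → unitInterval) : H.LOp → unitInterval :=
  Quotient.lift (fun u => ⨅ s : S, σ (H.lAct u s))
    (fun u v h => iInf_congr fun s => by rw [h s])

/-- A left unity of `S`: an element `Σᵢ[eᵢ,δᵢ]` of `L` acting as the identity. -/
def IsLeftUnity (E : Multiset (S × Γ)) : Prop := ∀ a : S, H.lAct E a = a

/-- A right unity of `S`: a formal sum `Σⱼ[γⱼ,fⱼ]` with `Σⱼ a γⱼ fⱼ = a` for all `a`. -/
def IsRightUnity (E : Multiset (Γ × S)) : Prop :=
  ∀ a : S, ((E.map fun p => H.tri a p.1 p.2).sum) = a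

end GammaHemiring
/-- The sum of two fuzzy subsets: `(μ₁ ⊕ μ₂)(x) = sup_{x = u + v} min (μ₁ u) (μ₂ v)`. -/
noncomputable def fuzzySum {T : Type} [Add T] (μ ν : T → unitInterval) (x : T) : unitInterval :=
  ⨆ p : {p : T × T // x = p.1 + p.2}, μ (p : T × T).1 ⊓ ν (p : T × T).2


/-!
The maps `σ ↦ σ⁺′` and `μ ↦ μ⁺` are mutually inverse monotone maps between the two classes of
fuzzy h-ideals: a right unity `Σⱼ[γⱼ,fⱼ]` writes `x = Σⱼ x γⱼ fⱼ`, which gives `(σ⁺′)⁺ = σ`, and a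
left unity `E` gives `ℓ = ℓ E = Σᵢ ℓ [eᵢ,δᵢ]` in `L`, which gives `(μ⁺)⁺′ = μ`. Both maps satisfy
`f μ₁ ⊕ f μ₂ ≤ f (μ₁ ⊕ μ₂)`; applying `σ ↦ σ⁺′` to this inequality for `μ ↦ μ⁺` at `μᵢ = σᵢ⁺′`
turns it into the reverse inequality for `σ ↦ σ⁺′`, so `σ⁺′` commutes with `⊕`.
-/

lemma le_apply_multiset_sum {T : Type} [AddCommMonoid T] {μ : T → unitInterval} (h0 : μ 0 = 1)
    (hadd : ∀ x y, μ x ⊓ μ y ≤ μ (x + y)) {c : unitInterval} {m : Multiset T}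
    (hm : ∀ t ∈ m, c ≤ μ t) : c ≤ μ m.sum :=
  Multiset.sum_induction (c ≤ μ ·) m (fun _ _ ha hb => (le_inf ha hb).trans (hadd _ _))
    (h0 ▸ unitInterval.le_one') hm

lemma inf_le_fuzzySum {T : Type} [Add T] (μ ν : T → unitInterval) {x p q : T} (h : x = p + q) :
    μ p ⊓ ν q ≤ fuzzySum μ ν x :=
  le_iSup (fun r : {r : T × T // x = r.1 + r.2} => μ r.1.1 ⊓ ν r.1.2) ⟨(p, q), h⟩

lemma fuzzySum_zero {T : Type} [AddZeroClass T] {μ ν : T → unitInterval} (hμ : μ 0 = 1)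
    (hν : ν 0 = 1) : fuzzySum μ ν 0 = 1 := by
  refine le_antisymm unitInterval.le_one' ?_
  simpa [hμ, hν] using inf_le_fuzzySum μ ν (add_zero (0 : T)).symm

lemma fuzzySum_add {T : Type} [AddCommMonoid T] {μ ν : T → unitInterval}
    (hμ : ∀ x y, μ x ⊓ μ y ≤ μ (x + y)) (hν : ∀ x y, ν x ⊓ ν y ≤ ν (x + y)) (x y : T) :
    fuzzySum μ ν x ⊓ fuzzySum μ ν y ≤ fuzzySum μ ν (x + y) := by
  rw [fuzzySum, fuzzySum, iSup_inf_eq]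
  refine iSup_le fun ⟨⟨p, q⟩, hx⟩ => ?_
  rw [inf_iSup_eq]
  refine iSup_le fun ⟨⟨p', q'⟩, hy⟩ => ?_
  have hxy : x + y = (p + p') + (q + q') := by rw [hx, hy]; abel
  calc μ p ⊓ ν q ⊓ (μ p' ⊓ ν q') = (μ p ⊓ μ p') ⊓ (ν q ⊓ ν q') := inf_inf_inf_comm _ _ _ _
    _ ≤ μ (p + p') ⊓ ν (q + q') := inf_le_inf (hμ p p') (hν q q')
    _ ≤ fuzzySum μ ν (x + y) := inf_le_fuzzySum μ ν hxy

lemma fuzzySum_mul {T : Type} [NonUnitalSemiring T] {μ ν : T → unitInterval}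
    (hμ : ∀ x y, μ x ⊔ μ y ≤ μ (x * y)) (hν : ∀ x y, ν x ⊔ ν y ≤ ν (x * y)) (x y : T) :
    fuzzySum μ ν x ⊔ fuzzySum μ ν y ≤ fuzzySum μ ν (x * y) := by
  refine sup_le (iSup_le fun ⟨⟨p, q⟩, hx⟩ => ?_) (iSup_le fun ⟨⟨p, q⟩, hy⟩ => ?_)
  · refine le_trans ?_ (inf_le_fuzzySum μ ν (show x * y = p * y + q * y by rw [hx, add_mul]))
    exact inf_le_inf (le_sup_left.trans (hμ p y)) (le_sup_left.trans (hν q y))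
  · refine le_trans ?_ (inf_le_fuzzySum μ ν (show x * y = x * p + x * q by rw [hy, mul_add]))
    exact inf_le_inf (le_sup_right.trans (hμ x p)) (le_sup_right.trans (hν x q))

namespace GammaHemiring

variable {S Γ : Type} [AddCommMonoid S] [AddCommMonoid Γ] (H : GammaHemiring S Γ)

lemma lMk_surjective : Function.Surjective H.lMk := Quotient.mk_surjective

@[simp]
lemma lActQ_lMk (u : Multiset (S × Γ)) : H.lActQ (H.lMk u) = H.lAct u := rfl

lemma lActQ_zero (a : S) : H.lActQ 0 a = 0 := H.lAct_zero a

lemma lActQ_add (ℓ₁ ℓ₂ : H.LOp) (a : S) :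
    H.lActQ (ℓ₁ + ℓ₂) a = H.lActQ ℓ₁ a + H.lActQ ℓ₂ a :=
  Quotient.inductionOn₂ ℓ₁ ℓ₂ fun u v => H.lAct_add u v a

lemma lActQ_mul (ℓ₁ ℓ₂ : H.LOp) (a : S) :
    H.lActQ (ℓ₁ * ℓ₂) a = H.lActQ ℓ₁ (H.lActQ ℓ₂ a) :=
  Quotient.inductionOn₂ ℓ₁ ℓ₂ fun u v => H.lAct_mul u v a

lemma lAct_singleton (p : S × Γ) (a : S) : H.lAct {p} a = H.tri p.1 p.2 a := by
  simp [lAct]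

lemma tri_multiset_sum_left (m : Multiset S) (γ : Γ) (a : S) :
    H.tri m.sum γ a = (m.map fun t => H.tri t γ a).sum := by
  induction m using Multiset.induction_on with
  | empty => simp [H.zero_left]
  | cons b m ih => simp [H.add_left, ih]

lemma tri_lAct (u : Multiset (S × Γ)) (s : S) (γ : Γ) (a : S) :
    H.tri (H.lAct u s) γ a = H.lAct u (H.tri s γ a) := by
  rw [lAct, lAct, tri_multiset_sum_left, Multiset.map_map]
  exact congrArg Multiset.sum (Multiset.map_congr rfl fun p _ => (H.tri_assoc p.1 p.2 s γ a).symm)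

/-- The generator `[x,γ]` of `L`, as an additive map of `x`. -/
def lSingle (γ : Γ) : S →+ H.LOp where
  toFun x := H.lMk {(x, γ)}
  map_zero' := Quotient.sound fun a => by simp [lAct, H.zero_left]
  map_add' x y := Quotient.sound fun a => by simp [lAct, H.add_left]

lemma lSingle_apply (γ : Γ) (x : S) : H.lSingle γ x = H.lMk {(x, γ)} := rfl

lemma lMk_mul_lSingle (u : Multiset (S × Γ)) (s : S) (γ : Γ) :
    H.lMk u * H.lSingle γ s = H.lSingle γ (H.lAct u s) :=
  Quotient.sound fun a => by
    rw [lAct_mul, lAct_singleton, lAct_singleton]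
    exact (H.tri_lAct u s γ a).symm

lemma lSingle_mul_lSingle (x y : S) (γ β : Γ) :
    H.lSingle γ x * H.lSingle β y = H.lSingle β (H.tri x γ y) := by
  rw [lSingle_apply, lMk_mul_lSingle, lAct_singleton]

lemma lMk_eq_sum_lSingle (m : Multiset (S × Γ)) :
    H.lMk m = (m.map fun p => H.lSingle p.2 p.1).sum := by
  induction m using Multiset.induction_on with
  | empty => rfl
  | cons p m ih =>
    rw [Multiset.map_cons, Multiset.sum_cons, ← ih, lSingle_apply, mk_add, Multiset.singleton_add]

lemma lMk_mul_of_isLeftUnity (u : Multiset (S × Γ)) {E : Multiset (S × Γ)}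
    (hE : H.IsLeftUnity E) : H.lMk u * H.lMk E = H.lMk u :=
  Quotient.sound fun a => by rw [lAct_mul, hE a]

lemma plusPrime_apply (σ : S → unitInterval) (ℓ : H.LOp) :
    H.plusPrime σ ℓ = ⨅ s : S, σ (H.lActQ ℓ s) :=
  Quotient.inductionOn ℓ fun _ => rfl

lemma plusMap_apply (μ : H.LOp → unitInterval) (x : S) :
    H.plusMap μ x = ⨅ γ : Γ, μ (H.lSingle γ x) := rfl

lemma plusPrime_mono {σ₁ σ₂ : S → unitInterval} (h : σ₁ ≤ σ₂) :
    H.plusPrime σ₁ ≤ H.plusPrime σ₂ := fun ℓ => by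
  simp only [plusPrime_apply]
  exact iInf_mono fun s => h _

lemma plusMap_mono {μ₁ μ₂ : H.LOp → unitInterval} (h : μ₁ ≤ μ₂) :
    H.plusMap μ₁ ≤ H.plusMap μ₂ := fun _ => iInf_mono fun _ => h _

lemma plusPrime_inf (σ₁ σ₂ : S → unitInterval) :
    H.plusPrime (σ₁ ⊓ σ₂) = H.plusPrime σ₁ ⊓ H.plusPrime σ₂ := by
  funext ℓ
  simp only [Pi.inf_apply, plusPrime_apply]
  exact iInf_inf_eq

lemma le_apply_lActQ {σ : S → unitInterval} (h0 : σ 0 = 1)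
    (hadd : ∀ x y, σ x ⊓ σ y ≤ σ (x + y)) (htri : ∀ x γ y, σ x ⊔ σ y ≤ σ (H.tri x γ y))
    (ℓ : H.LOp) (a : S) : σ a ≤ σ (H.lActQ ℓ a) := by
  obtain ⟨u, rfl⟩ := H.lMk_surjective ℓ
  refine le_apply_multiset_sum h0 hadd (Multiset.forall_mem_map_iff.mpr fun p _ => ?_)
  exact le_sup_right.trans (htri p.1 p.2 a)

lemma isFuzzyHIdeal_plusPrime {σ : S → unitInterval} (hσ : H.IsGFuzzyHIdeal σ) (h0 : σ 0 = 1) :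
    IsFuzzyHIdeal (H.plusPrime σ) := by
  obtain ⟨hadd, htri, hh⟩ := hσ
  simp only [IsFuzzyHIdeal, plusPrime_apply]
  refine ⟨fun ℓ₁ ℓ₂ => le_iInf fun s => ?_, fun ℓ₁ ℓ₂ => ?_,
    fun ℓx ℓa ℓb ℓz hℓ => le_iInf fun s => ?_⟩
  · rw [lActQ_add]
    exact (inf_le_inf (iInf_le _ s) (iInf_le _ s)).trans (hadd _ _)
  · refine sup_le (le_iInf fun s => ?_) (le_iInf fun s => ?_) <;> rw [lActQ_mul]
    · exact iInf_le _ _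
    · exact (iInf_le _ s).trans (H.le_apply_lActQ h0 hadd htri ℓ₁ _)
  · have hs := congrArg (H.lActQ · s) hℓ
    simp only [lActQ_add] at hs
    exact (inf_le_inf (iInf_le _ s) (iInf_le _ s)).trans (hh _ _ _ _ hs)

lemma plusPrime_apply_zero {σ : S → unitInterval} (h0 : σ 0 = 1) : H.plusPrime σ 0 = 1 := by
  simp [plusPrime_apply, lActQ_zero, h0]

lemma isGFuzzyHIdeal_plusMap {μ : H.LOp → unitInterval} (hμ : IsFuzzyHIdeal μ) :
    H.IsGFuzzyHIdeal (H.plusMap μ) := by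
  obtain ⟨hadd, hmul, hh⟩ := hμ
  simp only [IsGFuzzyHIdeal, plusMap_apply]
  refine ⟨fun x y => le_iInf fun γ => ?_, fun x γ y => le_iInf fun β => ?_,
    fun x a b z h => le_iInf fun γ => ?_⟩
  · rw [map_add]
    exact (inf_le_inf (iInf_le _ γ) (iInf_le _ γ)).trans (hadd _ _)
  · rw [← lSingle_mul_lSingle]
    exact sup_le ((iInf_le _ γ).trans (le_sup_left.trans (hmul _ _)))
      ((iInf_le _ β).trans (le_sup_right.trans (hmul _ _)))
  · have hγ := congrArg (H.lSingle γ) h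
    rw [map_add, map_add, map_add] at hγ
    exact (inf_le_inf (iInf_le _ γ) (iInf_le _ γ)).trans (hh _ _ _ _ hγ)

lemma plusMap_apply_zero {μ : H.LOp → unitInterval} (h0 : μ 0 = 1) : H.plusMap μ 0 = 1 := by
  simp [plusMap_apply, h0]

lemma plusMap_plusPrime {σ : S → unitInterval} (h0 : σ 0 = 1)
    (hadd : ∀ x y, σ x ⊓ σ y ≤ σ (x + y)) (htri : ∀ x γ y, σ x ⊔ σ y ≤ σ (H.tri x γ y))
    {E' : Multiset (Γ × S)} (hE' : H.IsRightUnity E') :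
    H.plusMap (H.plusPrime σ) = σ := by
  funext x
  have hx : H.plusMap (H.plusPrime σ) x = ⨅ γ : Γ, ⨅ s : S, σ (H.tri x γ s) := by
    simp [plusMap_apply, plusPrime_apply, lSingle_apply, lAct_singleton]
  refine hx ▸ le_antisymm ?_ (le_iInf fun γ => le_iInf fun s => le_sup_left.trans (htri x γ s))
  conv_rhs => rw [← hE' x]
  refine le_apply_multiset_sum h0 hadd (Multiset.forall_mem_map_iff.mpr fun p _ => ?_)
  exact (iInf_le _ p.1).trans (iInf_le _ p.2)

lemma plusPrime_plusMap {μ : H.LOp → unitInterval} (h0 : μ 0 = 1)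
    (hadd : ∀ x y, μ x ⊓ μ y ≤ μ (x + y)) (hmul : ∀ x y, μ x ⊔ μ y ≤ μ (x * y))
    {E : Multiset (S × Γ)} (hE : H.IsLeftUnity E) :
    H.plusPrime (H.plusMap μ) = μ := by
  funext ℓ
  obtain ⟨u, rfl⟩ := H.lMk_surjective ℓ
  have hu : H.plusPrime (H.plusMap μ) (H.lMk u) =
      ⨅ s : S, ⨅ γ : Γ, μ (H.lMk u * H.lSingle γ s) := by
    simp [plusPrime_apply, plusMap_apply, lMk_mul_lSingle]
  refine hu ▸ le_antisymm ?_ (le_iInf fun s => le_iInf fun γ => le_sup_left.trans (hmul _ _))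
  conv_rhs =>
    rw [← H.lMk_mul_of_isLeftUnity u hE, H.lMk_eq_sum_lSingle E, ← Multiset.sum_map_mul_left]
  refine le_apply_multiset_sum h0 hadd (Multiset.forall_mem_map_iff.mpr fun p _ => ?_)
  exact (iInf_le _ p.1).trans (iInf_le _ p.2)

lemma fuzzySum_plusPrime_le (σ₁ σ₂ : S → unitInterval) :
    fuzzySum (H.plusPrime σ₁) (H.plusPrime σ₂) ≤ H.plusPrime (fuzzySum σ₁ σ₂) := by
  intro ℓ
  refine iSup_le fun ⟨⟨ℓ₁, ℓ₂⟩, hℓ⟩ => ?_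
  simp only [plusPrime_apply]
  refine le_iInf fun s => (inf_le_inf (iInf_le _ s) (iInf_le _ s)).trans ?_
  exact inf_le_fuzzySum σ₁ σ₂ (by rw [hℓ, lActQ_add])

lemma fuzzySum_plusMap_le (μ₁ μ₂ : H.LOp → unitInterval) :
    fuzzySum (H.plusMap μ₁) (H.plusMap μ₂) ≤ H.plusMap (fuzzySum μ₁ μ₂) := by
  intro x
  refine iSup_le fun ⟨⟨p, q⟩, hx⟩ => le_iInf fun γ => ?_
  refine (inf_le_inf (iInf_le _ γ) (iInf_le _ γ)).trans ?_
  exact inf_le_fuzzySum μ₁ μ₂ ((congrArg (H.lSingle γ) hx).trans (map_add _ _ _))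

lemma plusPrime_fuzzySum {σ₁ σ₂ : S → unitInterval}
    (hσ₁ : H.IsGFuzzyHIdeal σ₁) (h₁ : σ₁ 0 = 1) (hσ₂ : H.IsGFuzzyHIdeal σ₂) (h₂ : σ₂ 0 = 1)
    {E : Multiset (S × Γ)} (hE : H.IsLeftUnity E) {E' : Multiset (Γ × S)}
    (hE' : H.IsRightUnity E') :
    H.plusPrime (fuzzySum σ₁ σ₂) = fuzzySum (H.plusPrime σ₁) (H.plusPrime σ₂) := by
  obtain ⟨hadd₁, hmul₁, -⟩ := H.isFuzzyHIdeal_plusPrime hσ₁ h₁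
  obtain ⟨hadd₂, hmul₂, -⟩ := H.isFuzzyHIdeal_plusPrime hσ₂ h₂
  have h0 := fuzzySum_zero (H.plusPrime_apply_zero h₁) (H.plusPrime_apply_zero h₂)
  refine le_antisymm ?_ (H.fuzzySum_plusPrime_le σ₁ σ₂)
  have hle := H.fuzzySum_plusMap_le (H.plusPrime σ₁) (H.plusPrime σ₂)
  rw [H.plusMap_plusPrime h₁ hσ₁.1 hσ₁.2.1 hE', H.plusMap_plusPrime h₂ hσ₂.1 hσ₂.2.1 hE'] at hle
  calc H.plusPrime (fuzzySum σ₁ σ₂)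
      ≤ H.plusPrime (H.plusMap (fuzzySum (H.plusPrime σ₁) (H.plusPrime σ₂))) :=
        H.plusPrime_mono hle
    _ = fuzzySum (H.plusPrime σ₁) (H.plusPrime σ₂) :=
        H.plusPrime_plusMap h0 (fuzzySum_add hadd₁ hadd₂) (fuzzySum_mul hmul₁ hmul₂) hE

end GammaHemiring

/-- for `S` with left and right unities, `σ ↦ σ⁺′` is a lattice isomorphism
from the fuzzy h-ideals of `S` (with `σ 0 = 1`) onto the fuzzy h-ideals of `L` (with
`μ 0_L = 1`): it maps into, is injective, surjective, inclusion-preserving in both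
directions, and preserves `⊕` and `∩`. -/
theorem plusPrime_lattice_iso {S Γ : Type} [AddCommMonoid S] [AddCommMonoid Γ]
    (H : GammaHemiring S Γ)
    (E : Multiset (S × Γ)) (hE : H.IsLeftUnity E)
    (E' : Multiset (Γ × S)) (hE' : H.IsRightUnity E') :
    (∀ σ : S → unitInterval, H.IsGFuzzyHIdeal σ ∧ σ 0 = 1 →
      IsFuzzyHIdeal (H.plusPrime σ) ∧ H.plusPrime σ 0 = 1) ∧
    (∀ σ₁ σ₂ : S → unitInterval, (H.IsGFuzzyHIdeal σ₁ ∧ σ₁ 0 = 1) →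
      (H.IsGFuzzyHIdeal σ₂ ∧ σ₂ 0 = 1) → H.plusPrime σ₁ = H.plusPrime σ₂ → σ₁ = σ₂) ∧
    (∀ μ : H.LOp → unitInterval, IsFuzzyHIdeal μ ∧ μ 0 = 1 →
      ∃ σ : S → unitInterval, (H.IsGFuzzyHIdeal σ ∧ σ 0 = 1) ∧ H.plusPrime σ = μ) ∧
    (∀ σ₁ σ₂ : S → unitInterval, (H.IsGFuzzyHIdeal σ₁ ∧ σ₁ 0 = 1) →
      (H.IsGFuzzyHIdeal σ₂ ∧ σ₂ 0 = 1) →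
      (σ₁ ≤ σ₂ ↔ H.plusPrime σ₁ ≤ H.plusPrime σ₂)) ∧
    (∀ σ₁ σ₂ : S → unitInterval, (H.IsGFuzzyHIdeal σ₁ ∧ σ₁ 0 = 1) →
      (H.IsGFuzzyHIdeal σ₂ ∧ σ₂ 0 = 1) →
      H.plusPrime (fuzzySum σ₁ σ₂) = fuzzySum (H.plusPrime σ₁) (H.plusPrime σ₂)) ∧
    (∀ σ₁ σ₂ : S → unitInterval, (H.IsGFuzzyHIdeal σ₁ ∧ σ₁ 0 = 1) →
      (H.IsGFuzzyHIdeal σ₂ ∧ σ₂ 0 = 1) →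
      H.plusPrime (σ₁ ⊓ σ₂) = H.plusPrime σ₁ ⊓ H.plusPrime σ₂) := by
  have recover {σ : S → unitInterval} (hσ : H.IsGFuzzyHIdeal σ ∧ σ 0 = 1) :
      H.plusMap (H.plusPrime σ) = σ :=
    H.plusMap_plusPrime hσ.2 hσ.1.1 hσ.1.2.1 hE'
  refine ⟨fun σ hσ => ⟨H.isFuzzyHIdeal_plusPrime hσ.1 hσ.2, H.plusPrime_apply_zero hσ.2⟩,
    fun σ₁ σ₂ hσ₁ hσ₂ h => ?_,
    fun μ ⟨hμ, h0⟩ => ?_,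
    fun σ₁ σ₂ hσ₁ hσ₂ => ⟨H.plusPrime_mono, ?_⟩,
    fun σ₁ σ₂ hσ₁ hσ₂ => H.plusPrime_fuzzySum hσ₁.1 hσ₁.2 hσ₂.1 hσ₂.2 hE hE',
    fun σ₁ σ₂ _ _ => H.plusPrime_inf σ₁ σ₂⟩
  · rw [← recover hσ₁, ← recover hσ₂, h]
  · exact ⟨H.plusMap μ, ⟨H.isGFuzzyHIdeal_plusMap hμ, H.plusMap_apply_zero h0⟩,
      H.plusPrime_plusMap h0 hμ.1 hμ.2.1 hE⟩
  · intro h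
    simpa only [recover hσ₁, recover hσ₂] using H.plusMap_mono h
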